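/- arXiv:2002.05802 — 2 statements merged into one kernel-verified Lean document; each statement's English description precedes it below -/
import Mathlib

section
/- Let I ⊆ ℝ be an open interval, let i ∈ {2, …, n}, and let ρ, u : ℝⁿ × I → ℝ be C¹ functions and q : ℝⁿ × I → ℝ a C² function, with ρ(x, t) > 0 everywhere, satisfying ∂_t ρ + ∂_{x₁}(ρ u) = 0 and ∂_t q + u ∂_{x₁} q = 0 on ℝⁿ × I. Then ∂_t (∂_{x_i} q / ρ) + u ∂_{x₁} (∂_{x_i} q / ρ) = (∂_{x_i} q / ρ) ∂_{x₁} u − (∂_{x₁} q / ρ) ∂_{x_i} u on ℝⁿ × I. -/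
/-!
Along the unidirectional flow the material derivative is `D = ∂_t + u ∂_{x₁}`. Differentiating
`D q = 0` in `x_i` and using the symmetry of the second derivative gives the commutator identity
`D (∂_{x_i} q) = -(∂_{x₁} q) (∂_{x_i} u)`, while the continuity equation reads `D ρ = -ρ ∂_{x₁} u`.
The quotient rule for the derivation `D` then yields the formula.
-/

open Set Filter Topology

section MaterialDeriv

variable {𝕜 E : Type*} [NontriviallyNormedField 𝕜] [NormedAddCommGroup E] [NormedSpace 𝕜 E]

/-- `a` is the time direction and `b` the direction of the flow. -/
noncomputable def materialDeriv (u : E → 𝕜) (a b : E) (f : E → 𝕜) (p : E) : 𝕜 :=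
  fderiv 𝕜 f p a + u p * fderiv 𝕜 f p b

theorem fderiv_fderiv_apply {F : Type*} [NormedAddCommGroup F] [NormedSpace 𝕜 F] {f : E → F}
    {p : E} (hf : DifferentiableAt 𝕜 (fderiv 𝕜 f) p) (v w : E) :
    fderiv 𝕜 (fun x => fderiv 𝕜 f x v) p w = fderiv 𝕜 (fderiv 𝕜 f) p w v := by
  simp [fderiv_clm_apply hf (differentiableAt_const v)]

theorem fderiv_fun_div_apply {g r : E → 𝕜} {p : E} (hg : DifferentiableAt 𝕜 g p)
    (hr : DifferentiableAt 𝕜 r p) (hr0 : r p ≠ 0) (v : E) :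
    fderiv 𝕜 (fun x => g x / r x) p v
      = (fderiv 𝕜 g p v * r p - g p * fderiv 𝕜 r p v) / r p ^ 2 := by
  have hinv : HasFDerivAt (fun x => (r x)⁻¹) _ p := (hasFDerivAt_inv hr0).comp p hr.hasFDerivAt
  simp only [div_eq_mul_inv]
  rw [fderiv_fun_mul hg hinv.differentiableAt, hinv.fderiv]
  simp only [add_apply, smul_apply, ContinuousLinearMap.comp_apply,
    ContinuousLinearMap.toSpanSingleton_apply, smul_eq_mul]
  field_simp
  ring

variable {u : E → 𝕜} {a b : E} {p : E}

theorem materialDeriv_div {g r : E → 𝕜} (hg : DifferentiableAt 𝕜 g p)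
    (hr : DifferentiableAt 𝕜 r p) (hr0 : r p ≠ 0) :
    materialDeriv u a b (fun x => g x / r x) p
      = (materialDeriv u a b g p * r p - g p * materialDeriv u a b r p) / r p ^ 2 := by
  simp only [materialDeriv, fderiv_fun_div_apply hg hr hr0]
  field_simp
  ring

theorem materialDeriv_eq_of_continuity {ρ : E → 𝕜} (hρ : DifferentiableAt 𝕜 ρ p)
    (hu : DifferentiableAt 𝕜 u p)
    (hcont : fderiv 𝕜 ρ p a + fderiv 𝕜 (fun x => ρ x * u x) p b = 0) :
    materialDeriv u a b ρ p = -(ρ p * fderiv 𝕜 u p b) := by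
  rw [fderiv_fun_mul hρ hu] at hcont
  simp only [add_apply, smul_apply, smul_eq_mul] at hcont
  rw [materialDeriv]
  linear_combination hcont

theorem fderiv_materialDeriv_apply {q : E → 𝕜} (hq : DifferentiableAt 𝕜 (fderiv 𝕜 q) p)
    (hu : DifferentiableAt 𝕜 u p) (v : E) :
    fderiv 𝕜 (materialDeriv u a b q) p v
      = fderiv 𝕜 (fderiv 𝕜 q) p v a + u p * fderiv 𝕜 (fderiv 𝕜 q) p v b
        + fderiv 𝕜 q p b * fderiv 𝕜 u p v := by
  have hqa := hq.clm_apply (differentiableAt_const a)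
  have hqb := hq.clm_apply (differentiableAt_const b)
  have huqb : DifferentiableAt 𝕜 (fun x => u x * fderiv 𝕜 q x b) p := hu.mul hqb
  unfold materialDeriv
  rw [fderiv_fun_add hqa huqb, fderiv_fun_mul hu hqb]
  simp only [add_apply, smul_apply, smul_eq_mul, ← fderiv_fderiv_apply hq]
  ring

theorem materialDeriv_fderiv_apply {q : E → 𝕜} (hq : DifferentiableAt 𝕜 (fderiv 𝕜 q) p)
    (hsymm : IsSymmSndFDerivAt 𝕜 q p) (hu : DifferentiableAt 𝕜 u p) (v : E) :
    materialDeriv u a b (fun x => fderiv 𝕜 q x v) p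
      = fderiv 𝕜 (materialDeriv u a b q) p v - fderiv 𝕜 q p b * fderiv 𝕜 u p v := by
  rw [fderiv_materialDeriv_apply hq hu, materialDeriv, fderiv_fderiv_apply hq,
    fderiv_fderiv_apply hq, hsymm v a, hsymm v b]
  ring

theorem materialDeriv_fderiv_apply_of_transport {q : E → 𝕜}
    (hq : DifferentiableAt 𝕜 (fderiv 𝕜 q) p) (hsymm : IsSymmSndFDerivAt 𝕜 q p)
    (hu : DifferentiableAt 𝕜 u p) (htrans : materialDeriv u a b q =ᶠ[𝓝 p] fun _ => 0) (v : E) :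
    materialDeriv u a b (fun x => fderiv 𝕜 q x v) p = -(fderiv 𝕜 q p b * fderiv 𝕜 u p v) := by
  rw [materialDeriv_fderiv_apply hq hsymm hu, htrans.fderiv_eq, fderiv_const_apply]
  simp

end MaterialDeriv

theorem stmt7_general (n : ℕ) (hn : 0 < n) (I : Set ℝ) (hI_open : IsOpen I)
    (i : Fin n)
    (ρ u : ((Fin n → ℝ) × ℝ) → ℝ) (q : ((Fin n → ℝ) × ℝ) → ℝ)
    (hρ : ContDiffOn ℝ 1 ρ (Set.univ ×ˢ I))
    (hu : ContDiffOn ℝ 1 u (Set.univ ×ˢ I))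
    (hq : ContDiffOn ℝ 2 q (Set.univ ×ˢ I))
    (hpos : ∀ p ∈ Set.univ ×ˢ I, 0 < ρ p)
    (hcont : ∀ p ∈ Set.univ ×ˢ I,
      fderiv ℝ ρ p ((0 : Fin n → ℝ), (1 : ℝ)) +
        fderiv ℝ (fun w => ρ w * u w) p
          ((Pi.single (⟨0, hn⟩ : Fin n) (1 : ℝ) : Fin n → ℝ), (0 : ℝ)) = 0)
    (htrans : ∀ p ∈ Set.univ ×ˢ I,
      fderiv ℝ q p ((0 : Fin n → ℝ), (1 : ℝ)) +
        u p * fderiv ℝ q p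
          ((Pi.single (⟨0, hn⟩ : Fin n) (1 : ℝ) : Fin n → ℝ), (0 : ℝ)) = 0) :
    ∀ p ∈ Set.univ ×ˢ I,
      fderiv ℝ (fun w =>
          fderiv ℝ q w ((Pi.single i (1 : ℝ) : Fin n → ℝ), (0 : ℝ)) / ρ w)
          p ((0 : Fin n → ℝ), (1 : ℝ)) +
        u p * fderiv ℝ (fun w =>
          fderiv ℝ q w ((Pi.single i (1 : ℝ) : Fin n → ℝ), (0 : ℝ)) / ρ w)
          p ((Pi.single (⟨0, hn⟩ : Fin n) (1 : ℝ) : Fin n → ℝ), (0 : ℝ))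
      = (fderiv ℝ q p ((Pi.single i (1 : ℝ) : Fin n → ℝ), (0 : ℝ)) / ρ p) *
          fderiv ℝ u p ((Pi.single (⟨0, hn⟩ : Fin n) (1 : ℝ) : Fin n → ℝ), (0 : ℝ))
        - (fderiv ℝ q p ((Pi.single (⟨0, hn⟩ : Fin n) (1 : ℝ) : Fin n → ℝ), (0 : ℝ)) / ρ p) *
          fderiv ℝ u p ((Pi.single i (1 : ℝ) : Fin n → ℝ), (0 : ℝ)) := by
  intro p hp
  have hnhds : univ ×ˢ I ∈ 𝓝 p := (isOpen_univ.prod hI_open).mem_nhds hp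
  have hq2 : ContDiffAt ℝ 2 q p := hq.contDiffAt hnhds
  have hq' : DifferentiableAt ℝ (fderiv ℝ q) p :=
    (hq2.fderiv_right (m := 1) le_rfl).differentiableAt one_ne_zero
  have hρp : DifferentiableAt ℝ ρ p := (hρ.contDiffAt hnhds).differentiableAt one_ne_zero
  have hup : DifferentiableAt ℝ u p := (hu.contDiffAt hnhds).differentiableAt one_ne_zero
  have hDq := materialDeriv_fderiv_apply_of_transport hq' (hq2.isSymmSndFDerivAt (by simp)) hup
    (eventually_of_mem hnhds htrans) ((Pi.single i 1 : Fin n → ℝ), (0 : ℝ))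
  have hDρ := materialDeriv_eq_of_continuity hρp hup (hcont p hp)
  change materialDeriv u _ _ _ p = _
  rw [materialDeriv_div (hq'.clm_apply (differentiableAt_const _)) hρp (hpos p hp).ne', hDq, hDρ]
  field_simp
  ring

/-- For a transverse direction `i ≠ 1` (0-indexed: `i ≠ 0`), the material derivative of
`∂_{x_i} q / ρ` along the unidirectional flow equals
`(∂_{x_i} q / ρ) ∂_{x₁} u − (∂_{x₁} q / ρ) ∂_{x_i} u`. -/
theorem stmt7 (n : ℕ) (hn : 0 < n) (I : Set ℝ) (hI_open : IsOpen I) (hI_conn : I.OrdConnected)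
    (i : Fin n) (hi : (i : ℕ) ≠ 0)
    (ρ u : ((Fin n → ℝ) × ℝ) → ℝ) (q : ((Fin n → ℝ) × ℝ) → ℝ)
    (hρ : ContDiffOn ℝ 1 ρ (Set.univ ×ˢ I))
    (hu : ContDiffOn ℝ 1 u (Set.univ ×ˢ I))
    (hq : ContDiffOn ℝ 2 q (Set.univ ×ˢ I))
    (hpos : ∀ p ∈ Set.univ ×ˢ I, 0 < ρ p)
    (hcont : ∀ p ∈ Set.univ ×ˢ I,
      fderiv ℝ ρ p ((0 : Fin n → ℝ), (1 : ℝ)) +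
        fderiv ℝ (fun w => ρ w * u w) p
          ((Pi.single (⟨0, hn⟩ : Fin n) (1 : ℝ) : Fin n → ℝ), (0 : ℝ)) = 0)
    (htrans : ∀ p ∈ Set.univ ×ˢ I,
      fderiv ℝ q p ((0 : Fin n → ℝ), (1 : ℝ)) +
        u p * fderiv ℝ q p
          ((Pi.single (⟨0, hn⟩ : Fin n) (1 : ℝ) : Fin n → ℝ), (0 : ℝ)) = 0) :
    ∀ p ∈ Set.univ ×ˢ I,
      fderiv ℝ (fun w =>
          fderiv ℝ q w ((Pi.single i (1 : ℝ) : Fin n → ℝ), (0 : ℝ)) / ρ w)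
          p ((0 : Fin n → ℝ), (1 : ℝ)) +
        u p * fderiv ℝ (fun w =>
          fderiv ℝ q w ((Pi.single i (1 : ℝ) : Fin n → ℝ), (0 : ℝ)) / ρ w)
          p ((Pi.single (⟨0, hn⟩ : Fin n) (1 : ℝ) : Fin n → ℝ), (0 : ℝ))
      = (fderiv ℝ q p ((Pi.single i (1 : ℝ) : Fin n → ℝ), (0 : ℝ)) / ρ p) *
          fderiv ℝ u p ((Pi.single (⟨0, hn⟩ : Fin n) (1 : ℝ) : Fin n → ℝ), (0 : ℝ))
        - (fderiv ℝ q p ((Pi.single (⟨0, hn⟩ : Fin n) (1 : ℝ) : Fin n → ℝ), (0 : ℝ)) / ρ p) *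
          fderiv ℝ u p ((Pi.single i (1 : ℝ) : Fin n → ℝ), (0 : ℝ)) :=
  stmt7_general n hn I hI_open i ρ u q hρ hu hq hpos hcont htrans
end

section
/- Let n ≥ 1, α ∈ (0, 2), and let f : ℝⁿ → ℝ be C¹. Then for every x ∈ ℝⁿ and every z ∈ ℝⁿ with z ≠ 0, writing θ = z/|z|, one has |f(x+z) − f(x) − ∇f(x)·z| ≤ (2+α)^{−1/2} |z|^{1+α/2} ( ∫₀^{|z|} |∇f(x + rθ) − ∇f(x)|² r^{−(1+α)} dr )^{1/2}, where the right-hand side is interpreted as +∞ if the integral diverges. -/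
/-!
Along the ray `r ↦ x + r • θ` the fundamental theorem of calculus writes the Taylor remainder as
`∫₀^{|z|} ⟪∇f(x + rθ) − ∇f(x), θ⟫ dr`. Splitting the integrand as
`r^{(1+α)/2} · (|∇f(x + rθ) − ∇f(x)| r^{−(1+α)/2})` and applying Cauchy–Schwarz gives the bound,
because `∫₀^{|z|} r^{1+α} dr = |z|^{2+α} / (2+α)`. Cauchy–Schwarz is applied to lower
integrals in `ℝ≥0∞`, so it also covers a divergent radial integral.
-/

open MeasureTheory Set
open scoped RealInnerProductSpace

section Taylor

variable {E : Type*} [NormedAddCommGroup E] [InnerProductSpace ℝ E] [CompleteSpace E]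
  {f : E → ℝ}

theorem ContDiff.continuous_gradient (hf : ContDiff ℝ 1 f) : Continuous (gradient f) :=
  (InnerProductSpace.toDual ℝ E).symm.continuous.comp (hf.continuous_fderiv one_ne_zero)

theorem ContDiff.sub_sub_inner_gradient_eq_integral (hf : ContDiff ℝ 1 f) (x v : E) (L : ℝ) :
    f (x + L • v) - f x - ⟪gradient f x, L • v⟫ =
      ∫ r in (0 : ℝ)..L, ⟪gradient f (x + r • v) - gradient f x, v⟫ := by
  have hderiv : ∀ t : ℝ, HasDerivAt (fun t => f (x + t • v) - t * ⟪gradient f x, v⟫)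
      ⟪gradient f (x + t • v) - gradient f x, v⟫ t := by
    intro t
    have hline : HasDerivAt (fun t : ℝ => x + t • v) v t := by
      simpa using ((hasDerivAt_id t).smul_const v).const_add x
    have hcomp := ((hf.differentiable one_ne_zero _).hasFDerivAt).comp_hasDerivAt t hline
    simp only [inner_sub_left, inner_gradient_left]
    simpa using hcomp.fun_sub (hasDerivAt_mul_const ((fderiv ℝ f x) v))
  have hcont : Continuous fun r : ℝ => ⟪gradient f (x + r • v) - gradient f x, v⟫ := by
    have := hf.continuous_gradient
    fun_prop
  rw [intervalIntegral.integral_eq_sub_of_hasDerivAt (fun t _ => hderiv t)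
    (hcont.intervalIntegrable 0 L), inner_smul_right]
  simp only [zero_smul, add_zero, zero_mul, sub_zero]
  ring

theorem ContDiff.abs_sub_sub_inner_gradient_le (hf : ContDiff ℝ 1 f) (x v : E) {L : ℝ}
    (hL : 0 ≤ L) :
    |f (x + L • v) - f x - ⟪gradient f x, L • v⟫| ≤
      ‖v‖ * ∫ r in (0 : ℝ)..L, ‖gradient f (x + r • v) - gradient f x‖ := by
  have hcont : Continuous fun r : ℝ => ‖gradient f (x + r • v) - gradient f x‖ := by
    have := hf.continuous_gradient
    fun_prop
  rw [hf.sub_sub_inner_gradient_eq_integral, ← intervalIntegral.integral_const_mul,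
    ← Real.norm_eq_abs]
  refine intervalIntegral.norm_integral_le_of_norm_le hL (.of_forall fun r _ => ?_)
    ((hcont.const_mul _).intervalIntegrable 0 L)
  rw [Real.norm_eq_abs, mul_comm]
  exact abs_real_inner_le_norm _ _

end Taylor

theorem lintegral_Ioc_ofReal_rpow {s : ℝ} (hs : -1 < s) {L : ℝ} (hL : 0 ≤ L) :
    ∫⁻ r in Ioc 0 L, ENNReal.ofReal (r ^ s) = ENNReal.ofReal (L ^ (s + 1) / (s + 1)) := by
  rw [← ofReal_integral_eq_lintegral_ofReal (intervalIntegral.intervalIntegrable_rpow' hs).1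
    ((ae_restrict_iff' measurableSet_Ioc).2 (.of_forall fun r hr => Real.rpow_nonneg hr.1.le s)),
    ← intervalIntegral.integral_of_le hL, integral_rpow (.inl hs),
    Real.zero_rpow (by linarith), sub_zero]

theorem lintegral_Ioc_ofReal_le_mul_lintegral_sq_mul_rpow {α L : ℝ} (hα : -2 < α)
    (hL : 0 ≤ L) {h : ℝ → ℝ} (hh : Measurable h) (h0 : ∀ r, 0 ≤ h r) :
    ∫⁻ r in Ioc 0 L, ENNReal.ofReal (h r) ≤
      ENNReal.ofReal ((2 + α) ^ (-(1 / 2 : ℝ)) * L ^ (1 + α / 2)) *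
        (∫⁻ r in Ioc 0 L, ENNReal.ofReal (h r ^ 2 * r ^ (-(1 + α)))) ^ (1 / 2 : ℝ) := by
  set A : ℝ → ENNReal := fun r => ENNReal.ofReal (r ^ ((1 + α) / 2))
  set B : ℝ → ENNReal := fun r => ENNReal.ofReal (h r * r ^ (-((1 + α) / 2)))
  have hAB : EqOn (fun r => ENNReal.ofReal (h r)) (A * B) (Ioc 0 L) := fun r hr => by
    rw [Pi.mul_apply, ← ENNReal.ofReal_mul (Real.rpow_nonneg hr.1.le _), mul_left_comm,
      ← Real.rpow_add hr.1, add_neg_cancel, Real.rpow_zero, mul_one]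
  have hA : EqOn (fun r => A r ^ (2 : ℝ)) (fun r => ENNReal.ofReal (r ^ (1 + α))) (Ioc 0 L) :=
    fun r hr => by
      simp only [A]
      rw [ENNReal.ofReal_rpow_of_nonneg (Real.rpow_nonneg hr.1.le _) zero_le_two,
        ← Real.rpow_mul hr.1.le, div_mul_cancel₀ _ two_ne_zero]
  have hB : EqOn (fun r => B r ^ (2 : ℝ))
      (fun r => ENNReal.ofReal (h r ^ 2 * r ^ (-(1 + α)))) (Ioc 0 L) := fun r hr => by
    simp only [B]
    rw [ENNReal.ofReal_rpow_of_nonneg (mul_nonneg (h0 r) (Real.rpow_nonneg hr.1.le _))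
      zero_le_two, Real.mul_rpow (h0 r) (Real.rpow_nonneg hr.1.le _), ← Real.rpow_mul hr.1.le,
      Real.rpow_two]
    ring_nf
  have hconst : ENNReal.ofReal (L ^ (1 + α + 1) / (1 + α + 1)) ^ (1 / 2 : ℝ) =
      ENNReal.ofReal ((2 + α) ^ (-(1 / 2 : ℝ)) * L ^ (1 + α / 2)) := by
    rw [ENNReal.ofReal_rpow_of_nonneg (div_nonneg (Real.rpow_nonneg hL _) (by linarith))
      one_half_pos.le, Real.div_rpow (Real.rpow_nonneg hL _) (by linarith), ← Real.rpow_mul hL,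
      Real.rpow_neg (by linarith), div_eq_mul_inv, mul_comm]
    ring_nf
  calc ∫⁻ r in Ioc 0 L, ENNReal.ofReal (h r)
      = ∫⁻ r in Ioc 0 L, (A * B) r := setLIntegral_congr_fun measurableSet_Ioc hAB
    _ ≤ (∫⁻ r in Ioc 0 L, A r ^ (2 : ℝ)) ^ (1 / 2 : ℝ) *
          (∫⁻ r in Ioc 0 L, B r ^ (2 : ℝ)) ^ (1 / 2 : ℝ) :=
        ENNReal.lintegral_mul_le_Lp_mul_Lq _ .two_two (by fun_prop) (by fun_prop)
    _ = _ := by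
        rw [setLIntegral_congr_fun measurableSet_Ioc hA,
          setLIntegral_congr_fun measurableSet_Ioc hB,
          lintegral_Ioc_ofReal_rpow (by linarith) hL, hconst]

theorem stmt10_general (n : ℕ) (α : ℝ) (hα0 : 0 < α)
    (f : EuclideanSpace ℝ (Fin n) → ℝ) (hf : ContDiff ℝ 1 f)
    (x z : EuclideanSpace ℝ (Fin n)) (hz : z ≠ 0) :
    ENNReal.ofReal |f (x + z) - f x - ⟪gradient f x, z⟫| ≤
      ENNReal.ofReal ((2 + α) ^ (-(1 / 2 : ℝ)) * ‖z‖ ^ (1 + α / 2)) *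
        (∫⁻ r in Set.Ioc (0 : ℝ) ‖z‖,
            ENNReal.ofReal
              (‖gradient f (x + r • (‖z‖⁻¹ • z)) - gradient f x‖ ^ 2 *
                r ^ (-(1 + α)))) ^ (1 / 2 : ℝ) := by
  set θ := ‖z‖⁻¹ • z
  have hzθ : ‖z‖ • θ = z := smul_inv_smul₀ (norm_ne_zero_iff.2 hz) z
  have hθ : ‖θ‖ = 1 := norm_smul_inv_norm hz
  set H : ℝ → ℝ := fun r => ‖gradient f (x + r • θ) - gradient f x‖
  have hH : Continuous H := by
    have := hf.continuous_gradient
    fun_prop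
  calc ENNReal.ofReal |f (x + z) - f x - ⟪gradient f x, z⟫|
      ≤ ENNReal.ofReal (∫ r in (0 : ℝ)..‖z‖, H r) := by
        gcongr
        simpa [hzθ, hθ] using hf.abs_sub_sub_inner_gradient_le x θ (norm_nonneg z)
    _ = ∫⁻ r in Ioc 0 ‖z‖, ENNReal.ofReal (H r) := by
        rw [intervalIntegral.integral_of_le (norm_nonneg z), ofReal_integral_eq_lintegral_ofReal
          hH.integrableOn_Ioc (.of_forall fun r => norm_nonneg _)]
    _ ≤ _ := lintegral_Ioc_ofReal_le_mul_lintegral_sq_mul_rpow (by linarith) (norm_nonneg z)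
        hH.measurable fun r => norm_nonneg _

/-- Cauchy–Schwarz bound of the first-order Taylor remainder by the radial part of the
dissipation: `|δ_z f(x) − ∇f(x)·z| ≤ (2+α)^{-1/2} |z|^{1+α/2} D_α(∇f)(x,θ)^{1/2}`,
with the right-hand side `+∞` if the radial integral diverges. -/
theorem stmt10 (n : ℕ) (hn : 1 ≤ n) (α : ℝ) (hα0 : 0 < α) (hα2 : α < 2)
    (f : EuclideanSpace ℝ (Fin n) → ℝ) (hf : ContDiff ℝ 1 f)
    (x z : EuclideanSpace ℝ (Fin n)) (hz : z ≠ 0) :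
    ENNReal.ofReal |f (x + z) - f x - ⟪gradient f x, z⟫| ≤
      ENNReal.ofReal ((2 + α) ^ (-(1 / 2 : ℝ)) * ‖z‖ ^ (1 + α / 2)) *
        (∫⁻ r in Set.Ioc (0 : ℝ) ‖z‖,
            ENNReal.ofReal
              (‖gradient f (x + r • (‖z‖⁻¹ • z)) - gradient f x‖ ^ 2 *
                r ^ (-(1 + α)))) ^ (1 / 2 : ℝ) :=
  stmt10_general n α hα0 f hf x z hz
end
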